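/- arXiv:math/0507230 — 11 statements merged into one kernel-verified Lean document; each statement's English description precedes it below -/
import Mathlib

section
/- Let (X, cl) be a generalized closure space in which exterior points are cl-separated. Then (X, cl) is R₀. -/
/-- Subsets `A` and `B` are cl-separated. -/
def ClSeparated {X : Type*} (cl : Set X → Set X) (A B : Set X) : Prop :=
  A ∩ cl B = ∅ ∧ cl A ∩ B = ∅

/-- Exterior points are cl-separated. -/
def ExtPtsSeparated {X : Type*} (cl : Set X → Set X) : Prop :=
  ∀ (A : Set X) (x : X), x ∉ cl A → ClSeparated cl {x} A

/-- cl is isotonic. -/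
def Isotonic {X : Type*} (cl : Set X → Set X) : Prop :=
  ∀ A B : Set X, A ⊆ B → cl A ⊆ cl B

/-- cl is pointwise-symmetric. -/
def PointwiseSymmetric {X : Type*} (cl : Set X → Set X) : Prop :=
  ∀ x y : X, x ∈ cl {y} → y ∈ cl {x}

/-- The interior associated with cl. -/
def ClInterior {X : Type*} (cl : Set X → Set X) (N : Set X) : Set X :=
  (cl Nᶜ)ᶜ

/-- (X, cl) is R₀. -/
def ClR0Space {X : Type*} (cl : Set X → Set X) : Prop :=
  ∀ x y : X, (∀ N : Set X, y ∈ ClInterior cl N → x ∈ N) →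
    (∀ N : Set X, x ∈ ClInterior cl N → y ∈ N)

/-- f is closure-preserving. -/
def ClosurePreserving {X Y : Type*} (clX : Set X → Set X) (clY : Set Y → Set Y)
    (f : X → Y) : Prop :=
  ∀ A : Set X, f '' clX A ⊆ clY (f '' A)

/-- f is continuous. -/
def ClContinuous {X Y : Type*} (clX : Set X → Set X) (clY : Set Y → Set Y)
    (f : X → Y) : Prop :=
  ∀ B : Set Y, clX (f ⁻¹' B) ⊆ f ⁻¹' (clY B)

/-- f is nonseparating. -/
def Nonseparating {X Y : Type*} (clX : Set X → Set X) (clY : Set Y → Set Y)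
    (f : X → Y) : Prop :=
  ∀ A B : Set X, ClSeparated clY (f '' A) (f '' B) → ClSeparated clX A B

theorem extPtsSeparated_r0 {X : Type*} (cl : Set X → Set X)
    (h : ExtPtsSeparated cl) : ClR0Space cl := by
  intro x y hxy N hxN
  by_contra hyN
  have hx : x ∉ cl Nᶜ := hxN
  have hsep := h Nᶜ x hx
  have hy : y ∉ cl {x} := by
    intro hyc
    have : y ∈ cl {x} ∩ Nᶜ := ⟨hyc, hyN⟩
    rw [hsep.2] at this
    exact this
  have : y ∈ ClInterior cl {x}ᶜ := by
    simp only [ClInterior, compl_compl]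
    exact hy
  exact (hxy _ this) rfl
end

section
/- Let (X, cl) be a generalized closure space with cl isotonic. If cl is pointwise-symmetric, then exterior points are cl-separated in (X, cl). -/
theorem pointwiseSymmetric_extPtsSeparated {X : Type*} (cl : Set X → Set X)
    (hiso : Isotonic cl) (h : PointwiseSymmetric cl) : ExtPtsSeparated cl := by
  intro A x hx
  constructor
  · ext y; simp only [Set.mem_inter_iff, Set.mem_singleton_iff, Set.mem_empty_iff_false, iff_false]
    rintro ⟨rfl, hy⟩; exact hx hy
  · ext y; simp only [Set.mem_inter_iff, Set.mem_empty_iff_false, iff_false]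
    rintro ⟨hy, hyA⟩
    exact hx (hiso {y} A (Set.singleton_subset_iff.2 hyA) (h y x hy))
end

section
/- Let (X, cl) be a generalized closure space with cl isotonic. If cl is pointwise-symmetric, then (X, cl) is R₀. -/
theorem pointwiseSymmetric_r0 {X : Type*} (cl : Set X → Set X)
    (hiso : Isotonic cl) (h : PointwiseSymmetric cl) : ClR0Space cl := by
  intro x y hxy N hx
  by_contra hyN
  -- first: x ∈ cl {y}
  have hxcl : x ∈ cl {y} := by
    by_contra hxc
    have hycl : y ∉ cl {x} := fun hy => hxc (h y x hy)
    have : y ∈ ClInterior cl {x}ᶜ := by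
      simpa [ClInterior] using hycl
    exact (hxy _ this) rfl
  have hsub : ({y} : Set X) ⊆ Nᶜ := by
    intro z hz; simp at hz; subst hz; exact hyN
  exact hx (hiso _ _ hsub hxcl)
end

section
/- Let (X, cl) be a generalized closure space with cl isotonic. If (X, cl) is R₀, then cl is pointwise-symmetric. -/
theorem r0_pointwiseSymmetric {X : Type*} (cl : Set X → Set X)
    (hiso : Isotonic cl) (h : ClR0Space cl) : PointwiseSymmetric cl := by
  intro x y hxy
  by_contra hy
  have key : ∀ N : Set X, x ∈ ClInterior cl N → y ∈ N := by
    intro N hx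
    by_contra hyN
    exact hx (hiso {y} Nᶜ (by simpa using hyN) hxy)
  have := h y x key ({x}ᶜ) (by simpa [ClInterior] using hy)
  simp at this
end

section
/- Let X be a set and let S be a symmetric relation on subsets of X (representing a set of unordered pairs of subsets) such that, for all A, B, C ⊆ X: (1) if A ⊆ B and S(B, C), then S(A, C); and (2) if S({x}, B) holds for each x ∈ A and S({y}, A) holds for each y ∈ B, then S(A, B). Then there is a unique pointwise-symmetric isotonic closure function cl on X such that for all A, B ⊆ X, the sets A and B are cl-separated if and only if S(A, B) holds. -/
theorem exists_unique_closure_of_separation {X : Type*} (S : Set X → Set X → Prop)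
    (hsymm : ∀ A B : Set X, S A B → S B A)
    (h1 : ∀ A B C : Set X, A ⊆ B → S B C → S A C)
    (h2 : ∀ A B : Set X, (∀ x ∈ A, S {x} B) → (∀ y ∈ B, S {y} A) → S A B) :
    ∃! cl : Set X → Set X, PointwiseSymmetric cl ∧ Isotonic cl ∧
      ∀ A B : Set X, ClSeparated cl A B ↔ S A B := by
  classical
  refine ⟨fun A => {x | ¬ S {x} A}, ⟨?_, ?_, ?_⟩, ?_⟩
  · -- pointwise symmetric
    intro x y hxy hS
    exact hxy (hsymm _ _ hS)
  · -- isotonic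
    intro A B hAB x hx hS
    exact hx (hsymm _ _ (h1 A B {x} hAB (hsymm _ _ hS)))
  · -- separation iff
    intro A B
    constructor
    · rintro ⟨hAB, hBA⟩
      apply h2
      · intro x hxA
        by_contra h
        exact Set.eq_empty_iff_forall_notMem.mp hAB x ⟨hxA, h⟩
      · intro y hyB
        by_contra h
        exact Set.eq_empty_iff_forall_notMem.mp hBA y ⟨h, hyB⟩
    · intro hS
      constructor
      · ext x
        simp only [Set.mem_inter_iff, Set.mem_setOf_eq, Set.mem_empty_iff_false, iff_false,
          not_and, not_not]
        intro hxA
        exact h1 {x} A B (Set.singleton_subset_iff.mpr hxA) hS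
      · ext y
        simp only [Set.mem_inter_iff, Set.mem_setOf_eq, Set.mem_empty_iff_false, iff_false,
          not_and, not_not]
        intro hy hyB
        exact hy (h1 {y} B A (Set.singleton_subset_iff.mpr hyB) (hsymm _ _ hS))
  · -- uniqueness
    rintro cl ⟨hps, hiso, hsep⟩
    funext A
    ext x
    simp only [Set.mem_setOf_eq]
    constructor
    · intro hx hS
      have := (hsep {x} A).mpr hS
      have h1' := this.1
      exact Set.eq_empty_iff_forall_notMem.mp h1' x ⟨rfl, hx⟩
    · intro hnS
      by_contra hx
      apply hnS
      apply (hsep {x} A).mp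
      constructor
      · ext z
        simp only [Set.mem_inter_iff, Set.mem_singleton_iff, Set.mem_empty_iff_false, iff_false,
          not_and]
        rintro rfl
        exact hx
      · ext y
        simp only [Set.mem_inter_iff, Set.mem_empty_iff_false, iff_false, not_and]
        intro hy hyA
        exact hx (hiso {y} A (Set.singleton_subset_iff.mpr hyA) (hps y x hy))
end

section
/- Let (X, cl) be a generalized closure space in which exterior points are cl-separated. Then cl is sub-linear if and only if for all A, B, C ⊆ X, whenever A and B are cl-separated and A and C are cl-separated, the sets A and B ∪ C are cl-separated. -/
theorem sublinear_iff {X : Type*} (cl : Set X → Set X)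
    (h : ExtPtsSeparated cl) :
    (∀ A B : Set X, cl (A ∪ B) ⊆ cl A ∪ cl B) ↔
      ∀ A B C : Set X, ClSeparated cl A B → ClSeparated cl A C →
        ClSeparated cl A (B ∪ C) := by
  constructor
  · intro hsub A B C ⟨hAB1, hAB2⟩ ⟨hAC1, hAC2⟩
    constructor
    · apply Set.eq_empty_of_subset_empty
      intro x ⟨hxA, hxcl⟩
      rcases hsub B C hxcl with hx | hx
      · exact (hAB1 ▸ Set.mem_inter hxA hx : x ∈ (∅ : Set X))
      · exact (hAC1 ▸ Set.mem_inter hxA hx : x ∈ (∅ : Set X))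
    · apply Set.eq_empty_of_subset_empty
      intro x ⟨hxcl, hxBC⟩
      rcases hxBC with hx | hx
      · exact (hAB2 ▸ Set.mem_inter hxcl hx : x ∈ (∅ : Set X))
      · exact (hAC2 ▸ Set.mem_inter hxcl hx : x ∈ (∅ : Set X))
  · intro hsep A B
    intro x hx
    by_contra hcon
    rw [Set.mem_union] at hcon
    push_neg at hcon
    obtain ⟨hxA, hxB⟩ := hcon
    have hS := hsep {x} A B (h A x hxA) (h B x hxB)
    have := hS.1
    have : x ∈ ({x} : Set X) ∩ cl (A ∪ B) := ⟨rfl, hx⟩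
    rw [hS.1] at this
    exact this
end

section
/- Let (X, cl) be a generalized closure space in which exterior points are cl-separated. Suppose cl is enlarging and suppose that for all x ∈ X and all A, B ⊆ X, if {x} and B are not cl-separated and, for each y ∈ B, {y} and A are not cl-separated, then {x} and A are not cl-separated. Then cl is idempotent. -/
theorem idempotent_of_transitive {X : Type*} (cl : Set X → Set X)
    (h : ExtPtsSeparated cl)
    (henl : ∀ A : Set X, A ⊆ cl A)
    (htr : ∀ (x : X) (A B : Set X), ¬ ClSeparated cl {x} B →
      (∀ y ∈ B, ¬ ClSeparated cl {y} A) → ¬ ClSeparated cl {x} A) :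
    ∀ A : Set X, cl (cl A) = cl A := by
  intro A
  apply Set.Subset.antisymm _ (henl _)
  intro x hx
  by_contra hxA
  have hsep := h A x hxA
  refine htr x A (cl A) ?_ (fun y hy => ?_) hsep
  · intro ⟨h1, _⟩
    exact absurd h1 (Set.Nonempty.ne_empty ⟨x, rfl, hx⟩)
  · intro ⟨h1, _⟩
    exact absurd h1 (Set.Nonempty.ne_empty ⟨y, rfl, hy⟩)
end

section
/- Let (X, cl) be a generalized closure space in which exterior points are cl-separated. If cl is isotonic and idempotent, then for all x ∈ X and all A, B ⊆ X, whenever {x} and B are not cl-separated and, for each y ∈ B, {y} and A are not cl-separated, it follows that {x} and A are not cl-separated. -/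
theorem transitive_of_idempotent {X : Type*} (cl : Set X → Set X)
    (h : ExtPtsSeparated cl)
    (hiso : Isotonic cl)
    (hid : ∀ A : Set X, cl (cl A) = cl A) :
    ∀ (x : X) (A B : Set X), ¬ ClSeparated cl {x} B →
      (∀ y ∈ B, ¬ ClSeparated cl {y} A) → ¬ ClSeparated cl {x} A := by
  intro x A B hxB hBA hxA
  have hB : B ⊆ cl A := fun y hy => by
    by_contra hyc
    exact hBA y hy (h A y hyc)
  have hx : x ∈ cl B := by
    by_contra hxc
    exact hxB (h B x hxc)
  have hxA' : x ∈ cl A := by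
    have := hiso B (cl A) hB hx
    rwa [hid] at this
  have : x ∈ ({x} : Set X) ∩ cl A := ⟨rfl, hxA'⟩
  rw [hxA.1] at this
  exact this
end

section
/- Let (X, cl_X) and (Y, cl_Y) be generalized closure spaces and let f : X → Y. If cl_Y is isotonic and f is nonseparating, then for all C, D ⊆ Y, whenever C and D are cl_Y-separated, the preimages f⁻¹(C) and f⁻¹(D) are cl_X-separated. -/
theorem preimage_separated_of_nonseparating {X Y : Type*}
    (clX : Set X → Set X) (clY : Set Y → Set Y) (f : X → Y)
    (hiso : Isotonic clY) (hns : Nonseparating clX clY f) :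
    ∀ C D : Set Y, ClSeparated clY C D → ClSeparated clX (f ⁻¹' C) (f ⁻¹' D) := by
  intro C D ⟨h1, h2⟩
  apply hns
  constructor
  · apply Set.eq_empty_of_subset_empty
    intro y ⟨hy1, hy2⟩
    have : y ∈ C ∩ clY D :=
      ⟨Set.image_preimage_subset f C hy1, hiso _ D (Set.image_preimage_subset f D) hy2⟩
    rw [h1] at this; exact this
  · apply Set.eq_empty_of_subset_empty
    intro y ⟨hy1, hy2⟩
    have : y ∈ clY C ∩ D :=
      ⟨hiso _ C (Set.image_preimage_subset f C) hy1, Set.image_preimage_subset f D hy2⟩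
    rw [h2] at this; exact this
end

section
/- Let (X, cl_X) and (Y, cl_Y) be generalized closure spaces such that exterior points are cl_Y-separated in (Y, cl_Y), and let f : X → Y. Then f is nonseparating if and only if f is closure-preserving. -/
theorem nonseparating_iff_closurePreserving {X Y : Type*}
    (clX : Set X → Set X) (clY : Set Y → Set Y) (f : X → Y)
    (hY : ExtPtsSeparated clY) :
    Nonseparating clX clY f ↔ ClosurePreserving clX clY f := by
  constructor
  · intro hns A y hy
    rcases hy with ⟨x, hx, rfl⟩
    by_contra hfx
    have hsep := hY (f '' A) (f x) hfx
    have : ClSeparated clY (f '' {x}) (f '' A) := by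
      rwa [Set.image_singleton]
    have h := hns {x} A this
    have : x ∈ ({x} : Set X) ∩ clX A := ⟨rfl, hx⟩
    rw [h.1] at this
    exact this
  · intro hcp A B ⟨h1, h2⟩
    constructor
    · ext x; simp only [Set.mem_inter_iff, Set.mem_empty_iff_false, iff_false]
      rintro ⟨hxA, hxB⟩
      have : f x ∈ f '' A ∩ clY (f '' B) :=
        ⟨⟨x, hxA, rfl⟩, hcp B ⟨x, hxB, rfl⟩⟩
      rw [h1] at this; exact this
    · ext x; simp only [Set.mem_inter_iff, Set.mem_empty_iff_false, iff_false]
      rintro ⟨hxA, hxB⟩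
      have : f x ∈ clY (f '' A) ∩ f '' B :=
        ⟨hcp A ⟨x, hxA, rfl⟩, ⟨x, hxB, rfl⟩⟩
      rw [h2] at this; exact this
end

section
/- Let (X, cl_X) and (Y, cl_Y) be generalized closure spaces with cl_X and cl_Y isotonic and cl_Y pointwise-symmetric, and let f : X → Y. Then f is nonseparating if and only if f is continuous. -/
theorem nonseparating_iff_continuous {X Y : Type*}
    (clX : Set X → Set X) (clY : Set Y → Set Y) (f : X → Y)
    (hisoX : Isotonic clX) (hisoY : Isotonic clY)
    (hsym : PointwiseSymmetric clY) :
    Nonseparating clX clY f ↔ ClContinuous clX clY f := by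
  constructor
  · intro hns B x hx
    by_cases hsep : ClSeparated clY (f '' {x}) (f '' (f ⁻¹' B))
    · have h := (hns _ _ hsep).1
      have hx' : x ∈ ({x} : Set X) ∩ clX (f ⁻¹' B) := ⟨rfl, hx⟩
      rw [h] at hx'; exact hx'.elim
    · simp only [ClSeparated, not_and_or, ← Set.not_nonempty_iff_eq_empty, not_not] at hsep
      rcases hsep with ⟨y, hy1, hy2⟩ | ⟨y, hy1, hy2⟩
      · simp only [Set.image_singleton, Set.mem_singleton_iff] at hy1
        subst hy1
        exact hisoY _ _ (Set.image_preimage_subset f B) hy2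
      · simp only [Set.image_singleton] at hy1
        rcases hy2 with ⟨z, hz, rfl⟩
        have := hsym _ _ hy1
        exact hisoY {f z} B (by simpa using hz) this
  · intro hc A B hsep
    constructor
    · ext x
      simp only [Set.mem_inter_iff, Set.mem_empty_iff_false, iff_false, not_and]
      intro hxA hxB
      have h1 : x ∈ clX (f ⁻¹' (f '' B)) :=
        hisoX _ _ (Set.subset_preimage_image f B) hxB
      have h2 : f x ∈ clY (f '' B) := hc _ h1
      have : f x ∈ f '' A ∩ clY (f '' B) := ⟨⟨x, hxA, rfl⟩, h2⟩
      rw [hsep.1] at this; exact this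
    · ext x
      simp only [Set.mem_inter_iff, Set.mem_empty_iff_false, iff_false, not_and]
      intro hxA hxB
      have h1 : x ∈ clX (f ⁻¹' (f '' A)) :=
        hisoX _ _ (Set.subset_preimage_image f A) hxA
      have h2 : f x ∈ clY (f '' A) := hc _ h1
      have : f x ∈ clY (f '' A) ∩ f '' B := ⟨h2, ⟨x, hxB, rfl⟩⟩
      rw [hsep.2] at this; exact this
end
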